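/- For any 3-cycle (ijk) in S₄ with distinct i,j,k, the sum of the operators for the cycle and its inverse on (ℂ²)^⊗4 equals (1/2)(I + σᵢ·σⱼ + σⱼ·σₖ + σᵢ·σₖ). -/

import Mathlib

open Matrix

/-- The three Pauli matrices. -/
noncomputable def pauli : Fin 3 → Matrix (Fin 2) (Fin 2) ℂ :=
  ![!![0, 1; 1, 0], !![0, -Complex.I; Complex.I, 0], !![1, 0; 0, -1]]

/-- The operator on (ℂ^d)^⊗n permuting tensor factors according to π:
it sends `e_{i₁} ⊗ ... ⊗ e_{i_n}` to `e_{i_{π⁻¹(1)}} ⊗ ... ⊗ e_{i_{π⁻¹(n)}}`. -/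
noncomputable def permOp (d n : ℕ) (π : Equiv.Perm (Fin n)) :
    Matrix (Fin n → Fin d) (Fin n → Fin d) ℂ :=
  Matrix.of fun f g => if f = g ∘ ⇑π⁻¹ then 1 else 0

/-- The one-site operator acting as the 2×2 matrix `A` on tensor factor `i`
of (ℂ²)^⊗n and as the identity elsewhere. -/
noncomputable def opAt {n : ℕ} (i : Fin n) (A : Matrix (Fin 2) (Fin 2) ℂ) :
    Matrix (Fin n → Fin 2) (Fin n → Fin 2) ℂ :=
  Matrix.of fun f g => ∏ k, if k = i then A (f k) (g k) else (if f k = g k then 1 else 0)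

/-- σᵢ·σⱼ = ∑_{a ∈ {x,y,z}} (σᵃ at leg i)(σᵃ at leg j) on (ℂ²)^⊗n. -/
noncomputable def sdot {n : ℕ} (i j : Fin n) :
    Matrix (Fin n → Fin 2) (Fin n → Fin 2) ℂ :=
  ∑ a : Fin 3, opAt i (pauli a) * opAt j (pauli a)

/-!
Both 3-cycles factor into transpositions, `(ijk) = (ij)(jk)` and `(kji) = (jk)(ij)`, and each
transposition satisfies the Dirac identity `(ij) = ½(1 + σᵢ·σⱼ)`, which is the Pauli completeness
relation `1 ⊗ 1 + ∑ₐ σᵃ ⊗ σᵃ = 2 · SWAP` on the two factors involved. Expanding, the sum of the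
two 3-cycles is `¼(2 + 2σᵢ·σⱼ + 2σⱼ·σₖ + {σᵢ·σⱼ, σⱼ·σₖ})`. Pauli matrices on different factors
commute, so the anticommutator reduces to `σᵃσᵇ + σᵇσᵃ = 2δₐᵦ` on the shared factor `j`, giving
`{σᵢ·σⱼ, σⱼ·σₖ} = 2σᵢ·σₖ`.
-/

namespace Matrix

variable {ι l m n R : Type*} [Fintype ι] [CommSemiring R]

def piKron (M : ι → Matrix m n R) : Matrix (ι → m) (ι → n) R :=
  of fun f g => ∏ k, M k (f k) (g k)

@[simp]
theorem piKron_apply (M : ι → Matrix m n R) (f : ι → m) (g : ι → n) :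
    piKron M f g = ∏ k, M k (f k) (g k) := rfl

theorem piKron_mul_piKron [DecidableEq ι] [Fintype m] (M : ι → Matrix l m R)
    (N : ι → Matrix m n R) : piKron M * piKron N = piKron fun k => M k * N k := by
  ext f g
  simp only [mul_apply, piKron_apply, ← Finset.prod_mul_distrib]
  rw [Finset.prod_univ_sum, Fintype.piFinset_univ]

theorem piKron_one [DecidableEq m] : piKron (1 : ι → Matrix m m R) = 1 := by
  ext f g
  simp [one_apply, Finset.prod_boole, funext_iff]

variable [DecidableEq ι]

theorem piKron_update_apply (M : ι → Matrix m n R) (j : ι) (A : Matrix m n R)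
    (f : ι → m) (g : ι → n) :
    piKron (Function.update M j A) f g = A (f j) (g j) * ∏ k ∈ {j}ᶜ, M k (f k) (g k) := by
  rw [piKron_apply, Fintype.prod_eq_mul_prod_compl j, Function.update_self]
  congr 1
  refine Finset.prod_congr rfl fun k hk => ?_
  rw [Function.update_of_ne (by simpa using hk)]

theorem piKron_update_add (M : ι → Matrix m n R) (j : ι) (A B : Matrix m n R) :
    piKron (Function.update M j (A + B))
      = piKron (Function.update M j A) + piKron (Function.update M j B) := by
  ext f g
  simp only [add_apply, piKron_update_apply, add_mul]

theorem piKron_update_smul (M : ι → Matrix m n R) (j : ι) (c : R) (A : Matrix m n R) :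
    piKron (Function.update M j (c • A)) = c • piKron (Function.update M j A) := by
  ext f g
  simp only [smul_apply, piKron_update_apply, smul_eq_mul, mul_assoc]

theorem piKron_update_zero (M : ι → Matrix m n R) (j : ι) :
    piKron (Function.update M j 0) = 0 := by
  ext f g
  simp only [piKron_update_apply, zero_apply, zero_mul]

end Matrix

theorem Fintype.prod_eq_mul_mul_prod_compl_pair {ι M : Type*} [Fintype ι] [DecidableEq ι]
    [CommMonoid M] {i j : ι} (hij : i ≠ j) (F : ι → M) :
    ∏ k, F k = F i * F j * ∏ k ∈ {i, j}ᶜ, F k := by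
  rw [← Finset.prod_mul_prod_compl {i, j}, Finset.prod_pair hij]

theorem pauli_mul_add_pauli_mul (a b : Fin 3) :
    pauli a * pauli b + pauli b * pauli a = if a = b then (2 : ℂ) • 1 else 0 := by
  fin_cases a <;> fin_cases b <;> ext x y <;> fin_cases x <;> fin_cases y <;>
    simp [pauli, one_apply] <;> norm_num

/-- The entries of the completeness relation `1 ⊗ 1 + ∑ₐ σᵃ ⊗ σᵃ = 2 · SWAP`. -/
theorem pauli_completeness (x z y w : Fin 2) :
    (1 : Matrix (Fin 2) (Fin 2) ℂ) x z * (1 : Matrix (Fin 2) (Fin 2) ℂ) y w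
        + ∑ a, pauli a x z * pauli a y w
      = 2 * ((1 : Matrix (Fin 2) (Fin 2) ℂ) x w * (1 : Matrix (Fin 2) (Fin 2) ℂ) y z) := by
  fin_cases x <;> fin_cases z <;> fin_cases y <;> fin_cases w <;>
    simp [pauli, Fin.sum_univ_three, one_apply] <;> norm_num

theorem permOp_apply (d n : ℕ) (π : Equiv.Perm (Fin n)) (f g : Fin n → Fin d) :
    permOp d n π f g = ∏ k, (1 : Matrix (Fin d) (Fin d) ℂ) (f k) (g (π⁻¹ k)) := by
  simp [permOp, one_apply, Finset.prod_boole, funext_iff]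

theorem permOp_mul (d n : ℕ) (π ρ : Equiv.Perm (Fin n)) :
    permOp d n (π * ρ) = permOp d n π * permOp d n ρ := by
  ext f g
  simp only [permOp, mul_apply, of_apply, mul_ite, mul_one, mul_zero]
  rw [Finset.sum_ite_eq']
  simp [_root_.mul_inv_rev, Function.comp_assoc]

section

variable {n : ℕ}

theorem opAt_eq_piKron (i : Fin n) (A : Matrix (Fin 2) (Fin 2) ℂ) :
    opAt i A = piKron (Function.update 1 i A) := by
  ext f g
  simp only [opAt, of_apply, piKron_apply, Function.update_apply]
  refine Finset.prod_congr rfl fun k _ => ?_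
  split_ifs <;> simp [one_apply, *]

theorem opAt_mul_opAt (i : Fin n) (A B : Matrix (Fin 2) (Fin 2) ℂ) :
    opAt i A * opAt i B = opAt i (A * B) := by
  rw [opAt_eq_piKron, opAt_eq_piKron, opAt_eq_piKron, piKron_mul_piKron]
  rw [← Pi.mul_def, ← Function.update_mul, one_mul]

theorem opAt_commute {i j : Fin n} (hij : i ≠ j) (A B : Matrix (Fin 2) (Fin 2) ℂ) :
    Commute (opAt i A) (opAt j B) := by
  rw [Commute, SemiconjBy, opAt_eq_piKron, opAt_eq_piKron, piKron_mul_piKron, piKron_mul_piKron]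
  congr 1
  funext k
  rcases eq_or_ne k i with rfl | hki
  · simp [hij]
  · rcases eq_or_ne k j with rfl | hkj
    · simp [hki]
    · simp [hki, hkj]

theorem opAt_one (i : Fin n) : opAt i 1 = 1 := by
  rw [opAt_eq_piKron, Function.update_one, piKron_one]

theorem opAt_zero (i : Fin n) : opAt i 0 = 0 := by
  rw [opAt_eq_piKron, piKron_update_zero]

theorem opAt_smul (i : Fin n) (c : ℂ) (A : Matrix (Fin 2) (Fin 2) ℂ) :
    opAt i (c • A) = c • opAt i A := by
  rw [opAt_eq_piKron, opAt_eq_piKron, piKron_update_smul]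

theorem opAt_add (i : Fin n) (A B : Matrix (Fin 2) (Fin 2) ℂ) :
    opAt i (A + B) = opAt i A + opAt i B := by
  rw [opAt_eq_piKron, opAt_eq_piKron, opAt_eq_piKron, piKron_update_add]

theorem opAt_mul_opAt_apply {i j : Fin n} (hij : i ≠ j) (A B : Matrix (Fin 2) (Fin 2) ℂ)
    (f g : Fin n → Fin 2) :
    (opAt i A * opAt j B) f g = A (f i) (g i) * B (f j) (g j)
      * ∏ k ∈ {i, j}ᶜ, (1 : Matrix (Fin 2) (Fin 2) ℂ) (f k) (g k) := by
  rw [opAt_eq_piKron, opAt_eq_piKron, piKron_mul_piKron, piKron_apply,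
    Fintype.prod_eq_mul_mul_prod_compl_pair hij]
  congr 1
  · simp [hij, hij.symm]
  · refine Finset.prod_congr rfl fun k hk => ?_
    obtain ⟨hki, hkj⟩ : k ≠ i ∧ k ≠ j := by simpa [not_or] using hk
    simp [hki, hkj]

theorem permOp_swap {i j : Fin n} (hij : i ≠ j) :
    permOp 2 n (Equiv.swap i j) = (1 / 2 : ℂ) • (1 + sdot i j) := by
  ext f g
  have hrest : ∀ k ∈ ({i, j} : Finset (Fin n))ᶜ, (1 : Matrix (Fin 2) (Fin 2) ℂ) (f k)
      (g (Equiv.swap i j k)) = (1 : Matrix (Fin 2) (Fin 2) ℂ) (f k) (g k) := by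
    intro k hk
    obtain ⟨hki, hkj⟩ : k ≠ i ∧ k ≠ j := by simpa [not_or] using hk
    rw [Equiv.swap_apply_of_ne_of_ne hki hkj]
  rw [permOp_apply, Equiv.swap_inv, Fintype.prod_eq_mul_mul_prod_compl_pair hij,
    Equiv.swap_apply_left, Equiv.swap_apply_right, Finset.prod_congr rfl hrest,
    Matrix.smul_apply, Matrix.add_apply, ← piKron_one, piKron_apply,
    Fintype.prod_eq_mul_mul_prod_compl_pair hij, sdot, Matrix.sum_apply]
  simp only [opAt_mul_opAt_apply hij, ← Finset.sum_mul, Pi.one_apply]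
  rw [← add_mul, pauli_completeness]
  ring

theorem sdot_mul_sdot_add_sdot_mul_sdot {i j k : Fin n} (hij : i ≠ j) (hjk : j ≠ k)
    (hik : i ≠ k) : sdot i j * sdot j k + sdot j k * sdot i j = (2 : ℂ) • sdot i k := by
  have hterm : ∀ a b : Fin 3,
      opAt i (pauli a) * opAt j (pauli a) * (opAt j (pauli b) * opAt k (pauli b))
        + opAt j (pauli b) * opAt k (pauli b) * (opAt i (pauli a) * opAt j (pauli a))
      = opAt i (pauli a) * opAt j (pauli a * pauli b + pauli b * pauli a) * opAt k (pauli b) := by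
    intro a b
    rw [opAt_add, ← opAt_mul_opAt, ← opAt_mul_opAt]
    set x := opAt i (pauli a)
    set y := opAt j (pauli a)
    set y' := opAt j (pauli b)
    set z := opAt k (pauli b)
    have hyz : y * z = z * y := opAt_commute hjk (pauli a) (pauli b)
    have hx : x * (y' * z) = y' * z * x :=
      ((opAt_commute hij (pauli a) (pauli b)).mul_right (opAt_commute hik _ _)).eq
    rw [← mul_assoc (y' * z), ← hx, mul_assoc x (y' * z), mul_assoc y', ← hyz]
    noncomm_ring
  simp only [sdot, Finset.sum_mul_sum]
  rw [Finset.sum_comm]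
  simp only [← Finset.sum_add_distrib, hterm, pauli_mul_add_pauli_mul, apply_ite, opAt_smul,
    opAt_one, opAt_zero, mul_smul_comm, mul_one, mul_zero, ite_mul, smul_mul_assoc, zero_mul,
    Finset.sum_ite_eq', Finset.mem_univ, if_true, Finset.smul_sum]

end

theorem three_cycle_add_inv_eq_pauli (i j k : Fin 4) (hij : i ≠ j) (hjk : j ≠ k) (hik : i ≠ k) :
    permOp 2 4 (Equiv.swap i j * Equiv.swap j k)
      + permOp 2 4 ((Equiv.swap i j * Equiv.swap j k)⁻¹)
      = (1/2 : ℂ) • ((1 : Matrix (Fin 4 → Fin 2) (Fin 4 → Fin 2) ℂ)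
          + sdot i j + sdot j k + sdot i k) := by
  have hinv : (Equiv.swap i j * Equiv.swap j k)⁻¹ = Equiv.swap j k * Equiv.swap i j := by
    rw [_root_.mul_inv_rev, Equiv.swap_inv, Equiv.swap_inv]
  rw [hinv, permOp_mul, permOp_mul, permOp_swap hij, permOp_swap hjk, smul_mul_smul_comm,
    smul_mul_smul_comm, ← smul_add]
  have hexpand : ∀ a b : Matrix (Fin 4 → Fin 2) (Fin 4 → Fin 2) ℂ,
      (1 + a) * (1 + b) + (1 + b) * (1 + a) = (1 + a + b) + (1 + a + b) + (a * b + b * a) := by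
    intro a b
    noncomm_ring
  rw [hexpand, sdot_mul_sdot_add_sdot_mul_sdot hij hjk hik]
  module
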